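/- arXiv:2201.01493 — 8 statements merged into one kernel-verified Lean document; each statement's English description precedes it below -/
import Mathlib

section
/- Let L be a binary subword-closed language with Hom(L) = ∞ (i.e., for every natural number m there exists a letter a ∈ E such that the word a^m ā a^m belongs to L). Then for every natural number n, the minimum depth of a decision tree solving the recognition problem for L(n) deterministically equals n, and the minimum depth of a decision tree solving the recognition problem for L(n) nondeterministically equals n; in particular h_L^{rd}(n) = Θ(n) and h_L^{ra}(n) = Θ(n). -/
/-- Binary words over the alphabet `E = {0,1}`, encoded as lists of booleans. -/
abbrev Word := List Bool

/-- A binary language `L` is subword-closed if every subsequence (sublist) of a word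
of `L` belongs to `L`. -/
def SubwordClosed (L : Set Word) : Prop :=
  ∀ w ∈ L, ∀ u : Word, u.Sublist w → u ∈ L

/-- The word `a^m ā a^m`. -/
def homWord (m : ℕ) (a : Bool) : Word :=
  List.replicate m a ++ [!a] ++ List.replicate m a

/-- `Hom(L) = ∞`: for every `m` there is a letter `a` with `a^m ā a^m ∈ L`. -/
def HomInf (L : Set Word) : Prop := ∀ m : ℕ, ∃ a : Bool, homWord m a ∈ L

/-- The word `a^m ā^m`. -/
def hetWord (m : ℕ) (a : Bool) : Word :=
  List.replicate m a ++ List.replicate m (!a)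

/-- `Het(L) = ∞`: for every `m` there is a letter `a` with `a^m ā^m ∈ L`. -/
def HetInf (L : Set Word) : Prop := ∀ m : ℕ, ∃ a : Bool, hetWord m a ∈ L

/-- The set `L(n)` of words of `L` of length `n`. -/
def LangAt (L : Set Word) (n : ℕ) : Set Word := {w : Word | w ∈ L ∧ w.length = n}

/-- Subtrees of decision trees over words of length `n`: a terminal node carrying a
label from `β`, or a node querying a (0-indexed) position together with a list of
outgoing edges, each labeled with a letter from `E` and leading to a subtree. -/
inductive NTree (β : Type) : Type where
  | leaf : β → NTree β
  | node : ℕ → List (Bool × NTree β) → NTree β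

namespace NTree

variable {β : Type}

/-- All query positions are in `{0, …, n-1}` (i.e. attributes `l₁ⁿ,…,lₙⁿ`). -/
inductive Bounded (n : ℕ) : NTree β → Prop where
  | leaf (b : β) : Bounded n (leaf b)
  | node (i : ℕ) (cs : List (Bool × NTree β)) :
      i < n → (∀ p ∈ cs, Bounded n p.2) → Bounded n (node i cs)

/-- The edges leaving every query node carry pairwise different labels. -/
inductive Det : NTree β → Prop where
  | leaf (b : β) : Det (leaf b)
  | node (i : ℕ) (cs : List (Bool × NTree β)) :
      cs.Pairwise (fun p q => p.1 ≠ q.1) → (∀ p ∈ cs, Det p.2) → Det (node i cs)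

/-- `LeafLabel t b` holds iff some terminal node of `t` is labeled with `b`. -/
inductive LeafLabel : NTree β → β → Prop where
  | leaf (b : β) : LeafLabel (leaf b) b
  | node (i : ℕ) (cs : List (Bool × NTree β)) (p : Bool × NTree β) (b : β) :
      p ∈ cs → LeafLabel p.2 b → LeafLabel (node i cs) b

/-- `Reaches w t b` holds iff there is a complete path of `t` consistent with the word
`w` whose terminal node is labeled with `b`: at every query node on the path, the label
of the edge taken equals the queried letter of `w`. -/
inductive Reaches (w : Word) : NTree β → β → Prop where
  | leaf (b : β) : Reaches w (leaf b) b
  | node (i : ℕ) (cs : List (Bool × NTree β)) (p : Bool × NTree β) (b : β) :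
      p ∈ cs → w.getD i false = p.1 → Reaches w p.2 b → Reaches w (node i cs) b

/-- `DepthLe t d`: every complete path of `t` contains at most `d` query nodes. -/
inductive DepthLe : NTree β → ℕ → Prop where
  | leaf (b : β) (d : ℕ) : DepthLe (leaf b) d
  | node (i : ℕ) (cs : List (Bool × NTree β)) (d : ℕ) :
      (∀ p ∈ cs, DepthLe p.2 d) → DepthLe (node i cs) (d + 1)

end NTree

/-- A decision tree: an (unlabeled) root together with the unlabeled edges leaving it,
each leading to a subtree. -/
structure DTree (β : Type) where
  roots : List (NTree β)

namespace DTree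

variable {β : Type}

/-- The tree only uses attributes `l₁ⁿ,…,lₙⁿ` (0-indexed positions `< n`). -/
def Bounded (n : ℕ) (Γ : DTree β) : Prop := ∀ t ∈ Γ.roots, NTree.Bounded n t

/-- Deterministic: exactly one edge leaves the root, and the edges leaving every
other node carry pairwise different labels. -/
def Det (Γ : DTree β) : Prop := Γ.roots.length = 1 ∧ ∀ t ∈ Γ.roots, NTree.Det t

/-- Some terminal node of `Γ` is labeled with `b`. -/
def LeafLabel (Γ : DTree β) (b : β) : Prop := ∃ t ∈ Γ.roots, NTree.LeafLabel t b

/-- Some complete path of `Γ` consistent with `w` ends in a terminal node labeled `b`. -/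
def Reaches (Γ : DTree β) (w : Word) (b : β) : Prop := ∃ t ∈ Γ.roots, NTree.Reaches w t b

/-- The depth of `Γ` (maximum number of query nodes on a complete path) is at most `d`. -/
def DepthLe (Γ : DTree β) (d : ℕ) : Prop := ∀ t ∈ Γ.roots, NTree.DepthLe t d

end DTree

/-- `Γ` solves the problem of recognition for `L(n)` nondeterministically: every
terminal node is labeled with a word of `L(n)`, every `w ∈ L(n)` is consistent with
some complete path, and every complete path consistent with a word `w ∈ L(n)` ends
in a terminal node labeled with `w`. -/
def SolvesRecNondet (L : Set Word) (n : ℕ) (Γ : DTree Word) : Prop :=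
  Γ.Bounded n ∧
  (∀ b : Word, Γ.LeafLabel b → b ∈ L ∧ b.length = n) ∧
  (∀ w ∈ L, w.length = n → ∃ b : Word, Γ.Reaches w b) ∧
  (∀ w ∈ L, w.length = n → ∀ b : Word, Γ.Reaches w b → b = w)

/-- `Γ` solves the problem of recognition for `L(n)` deterministically. -/
def SolvesRecDet (L : Set Word) (n : ℕ) (Γ : DTree Word) : Prop :=
  Γ.Det ∧ SolvesRecNondet L n Γ

/-- `Γ` solves the problem of membership for `L(n)` nondeterministically: every word
of length `n` is consistent with some complete path, and every complete path
consistent with a word `w` of length `n` ends in a terminal node labeled `1`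
(i.e. `true`) if `w ∈ L(n)` and `0` (i.e. `false`) otherwise. -/
def SolvesMemNondet (L : Set Word) (n : ℕ) (Γ : DTree Bool) : Prop :=
  Γ.Bounded n ∧
  (∀ w : Word, w.length = n → ∃ b : Bool, Γ.Reaches w b) ∧
  (∀ w : Word, w.length = n → ∀ b : Bool, Γ.Reaches w b → (b = true ↔ w ∈ L))

/-- `Γ` solves the problem of membership for `L(n)` deterministically. -/
def SolvesMemDet (L : Set Word) (n : ℕ) (Γ : DTree Bool) : Prop :=
  Γ.Det ∧ SolvesMemNondet L n Γ

open Classical in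
/-- `h_L^{rd}(n)`: the minimum depth of a decision tree solving the problem of
recognition for `L(n)` deterministically (`0` if `L(n) = ∅`). -/
noncomputable def hrd (L : Set Word) (n : ℕ) : ℕ :=
  if LangAt L n = ∅ then 0
  else sInf {d : ℕ | ∃ Γ : DTree Word, SolvesRecDet L n Γ ∧ Γ.DepthLe d}

open Classical in
/-- `h_L^{ra}(n)`: the minimum depth of a decision tree solving the problem of
recognition for `L(n)` nondeterministically (`0` if `L(n) = ∅`). -/
noncomputable def hra (L : Set Word) (n : ℕ) : ℕ :=
  if LangAt L n = ∅ then 0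
  else sInf {d : ℕ | ∃ Γ : DTree Word, SolvesRecNondet L n Γ ∧ Γ.DepthLe d}

open Classical in
/-- `h_L^{md}(n)`: the minimum depth of a decision tree solving the problem of
membership for `L(n)` deterministically (`0` if `L(n) = ∅`). -/
noncomputable def hmd (L : Set Word) (n : ℕ) : ℕ :=
  if LangAt L n = ∅ then 0
  else sInf {d : ℕ | ∃ Γ : DTree Bool, SolvesMemDet L n Γ ∧ Γ.DepthLe d}

open Classical in
/-- `h_L^{ma}(n)`: the minimum depth of a decision tree solving the problem of
membership for `L(n)` nondeterministically (`0` if `L(n) = ∅`). -/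
noncomputable def hma (L : Set Word) (n : ℕ) : ℕ :=
  if LangAt L n = ∅ then 0
  else sInf {d : ℕ | ∃ Γ : DTree Bool, SolvesMemNondet L n Γ ∧ Γ.DepthLe d}

section Aux

open Classical

variable {L : Set Word} {n : ℕ}

/-- `u` extends to a word of `L(n)`. -/
def Extends (L : Set Word) (n : ℕ) (u : Word) : Prop :=
  ∃ w ∈ L, w.length = n ∧ u <+: w

open Classical in
/-- The canonical tree for `L(n)`: query positions in order, keeping only
extendable branches. -/
noncomputable def buildT (L : Set Word) (n : ℕ) : ℕ → Word → NTree Word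
  | 0, u => .leaf u
  | r+1, u => .node u.length
      ((List.filter (fun b => decide (Extends L n (u ++ [b]))) [true, false]).map
        (fun b => (b, buildT L n r (u ++ [b]))))

lemma buildT_bounded : ∀ r u, u.length + r = n → NTree.Bounded n (buildT L n r u) := by
  intro r
  induction r with
  | zero => intro u _; exact NTree.Bounded.leaf u
  | succ r ih =>
    intro u hu
    refine NTree.Bounded.node _ _ (by omega) ?_
    intro p hp
    simp only [List.mem_map, List.mem_filter] at hp
    obtain ⟨b, _, rfl⟩ := hp
    exact ih (u ++ [b]) (by simp; omega)

lemma buildT_det : ∀ r u, NTree.Det (buildT L n r u) := by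
  intro r
  induction r with
  | zero => intro u; exact NTree.Det.leaf u
  | succ r ih =>
    intro u
    refine NTree.Det.node _ _ ?_ ?_
    · rw [List.pairwise_map]
      exact List.Pairwise.filter _ (by simp)
    · intro p hp
      simp only [List.mem_map, List.mem_filter] at hp
      obtain ⟨b, _, rfl⟩ := hp
      exact ih (u ++ [b])

lemma buildT_depth : ∀ r u, NTree.DepthLe (buildT L n r u) r := by
  intro r
  induction r with
  | zero => intro u; exact NTree.DepthLe.leaf u 0
  | succ r ih =>
    intro u
    refine NTree.DepthLe.node _ _ r ?_
    intro p hp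
    simp only [List.mem_map, List.mem_filter] at hp
    obtain ⟨b, _, rfl⟩ := hp
    exact ih (u ++ [b])

lemma buildT_leaf : ∀ r u b, u.length + r = n → Extends L n u →
    NTree.LeafLabel (buildT L n r u) b → b ∈ L ∧ b.length = n := by
  intro r
  induction r with
  | zero =>
    intro u b hu hext hlab
    cases hlab
    obtain ⟨w, hwL, hwn, hpre⟩ := hext
    have : u = w := hpre.eq_of_length (by omega)
    subst this
    exact ⟨hwL, hwn⟩
  | succ r ih =>
    intro u b hu hext hlab
    cases hlab with
    | node i cs p _ hp hlab' =>
      simp only [List.mem_map, List.mem_filter] at hp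
      obtain ⟨b', ⟨_, hdec⟩, rfl⟩ := hp
      have hext' : Extends L n (u ++ [b']) := of_decide_eq_true hdec
      exact ih (u ++ [b']) b (by simp; omega) hext' hlab'

lemma buildT_complete : ∀ r u w, w ∈ L → w.length = n → u.length + r = n →
    u <+: w → NTree.Reaches w (buildT L n r u) w := by
  intro r
  induction r with
  | zero =>
    intro u w hwL hwn hu hpre
    have : u = w := hpre.eq_of_length (by omega)
    subst this
    exact NTree.Reaches.leaf u
  | succ r ih =>
    intro u w hwL hwn hu hpre
    obtain ⟨t, rfl⟩ := hpre
    have ht : t ≠ [] := by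
      intro h; subst h; simp at hwn; omega
    obtain ⟨c, t', rfl⟩ := List.exists_cons_of_ne_nil ht
    have hget : (u ++ c :: t').getD u.length false = c := by
      rw [List.getD_eq_getElem?_getD, List.getElem?_append_right le_rfl]
      simp
    have hpre' : u ++ [c] <+: u ++ c :: t' := ⟨t', by simp⟩
    have hext' : Extends L n (u ++ [c]) := ⟨u ++ c :: t', hwL, hwn, hpre'⟩
    refine NTree.Reaches.node u.length _ (c, buildT L n r (u ++ [c])) _ ?_ hget ?_
    · simp only [List.mem_map, List.mem_filter]
      exact ⟨c, ⟨by simp, decide_eq_true hext'⟩, rfl⟩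
    · exact ih (u ++ [c]) _ hwL hwn (by simp; omega) hpre'

lemma buildT_sound : ∀ r u (w b : Word), NTree.Reaches w (buildT L n r u) b →
    u <+: b ∧ b.length = u.length + r ∧
      ∀ i, u.length ≤ i → i < b.length → b.getD i false = w.getD i false := by
  intro r
  induction r with
  | zero =>
    intro u w b h
    cases h
    exact ⟨List.prefix_refl u, by simp, fun i h1 h2 => by omega⟩
  | succ r ih =>
    intro u w b h
    cases h with
    | node i cs p _ hp hget hr =>
      simp only [List.mem_map, List.mem_filter] at hp
      obtain ⟨b', ⟨_, _⟩, rfl⟩ := hp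
      obtain ⟨hpre, hlen, hagree⟩ := ih (u ++ [b']) w b hr
      simp only [List.length_append, List.length_singleton] at hlen
      refine ⟨((u.prefix_append [b']).trans hpre), by omega, ?_⟩
      intro i h1 h2
      rcases Nat.eq_or_lt_of_le h1 with heq | hlt
      · subst heq
        obtain ⟨t, rfl⟩ := hpre
        rw [List.getD_eq_getElem?_getD, List.append_assoc,
            List.getElem?_append_right le_rfl]
        simpa using hget.symm
      · exact hagree i (by simpa using hlt) h2

/-- The canonical deterministic decision tree solving recognition for `L(n)`. -/
noncomputable def canonTree (L : Set Word) (n : ℕ) : DTree Word :=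
  ⟨[buildT L n n []]⟩

lemma canonTree_solves (hne : ∃ w ∈ L, w.length = n) :
    SolvesRecDet L n (canonTree L n) ∧ (canonTree L n).DepthLe n := by
  obtain ⟨w₀, hw₀L, hw₀n⟩ := hne
  have hext : Extends L n ([] : Word) := ⟨w₀, hw₀L, hw₀n, List.nil_prefix⟩
  refine ⟨⟨⟨rfl, ?_⟩, ?_, ?_, ?_, ?_⟩, ?_⟩
  · rintro t ht
    simp only [canonTree, List.mem_singleton] at ht; subst ht
    exact buildT_det n []
  · rintro t ht
    simp only [canonTree, List.mem_singleton] at ht; subst ht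
    exact buildT_bounded n [] (by simp)
  · rintro b ⟨t, ht, hlab⟩
    simp only [canonTree, List.mem_singleton] at ht; subst ht
    exact buildT_leaf n [] b (by simp) hext hlab
  · intro w hwL hwn
    exact ⟨w, buildT L n n [], by simp [canonTree],
      buildT_complete n [] w hwL hwn (by simp) List.nil_prefix⟩
  · rintro w hwL hwn b ⟨t, ht, hr⟩
    simp only [canonTree, List.mem_singleton] at ht; subst ht
    obtain ⟨_, hlen, hagree⟩ := buildT_sound n [] w b hr
    simp only [List.length_nil, Nat.zero_add] at hlen
    refine List.ext_getElem (by omega) ?_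
    intro i h1 h2
    have := hagree i (Nat.zero_le i) h1
    rwa [List.getD_eq_getElem?_getD, List.getD_eq_getElem?_getD,
      List.getElem?_eq_getElem h1, List.getElem?_eq_getElem h2] at this
  · rintro t ht
    simp only [canonTree, List.mem_singleton] at ht; subst ht
    exact buildT_depth n []

/-- Stability of a bounded-depth path under changes outside the queried set. -/
lemma reach_stable {w b : Word} : ∀ (t : NTree Word) (d : ℕ),
    NTree.Reaches w t b → NTree.DepthLe t d →
    ∃ S : Finset ℕ, S.card ≤ d ∧
      ∀ w' : Word, (∀ i ∈ S, w'.getD i false = w.getD i false) →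
        NTree.Reaches w' t b := by
  intro t d hr
  induction hr generalizing d with
  | leaf b => exact fun _ => ⟨∅, by simp, fun w' _ => NTree.Reaches.leaf b⟩
  | node i cs p b hp hget _ ih =>
    intro hd
    cases hd with
    | node _ _ d' hch =>
      obtain ⟨S, hcard, hstab⟩ := ih d' (hch p hp)
      refine ⟨insert i S, le_trans (Finset.card_insert_le _ _) (by omega), ?_⟩
      intro w' hagree
      refine NTree.Reaches.node i cs p b hp ?_ ?_
      · rw [hagree i (Finset.mem_insert_self i S)]; exact hget
      · exact hstab w' (fun j hj => hagree j (Finset.mem_insert_of_mem hj))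

lemma lower_bound (hL : SubwordClosed L) (hhom : HomInf L) (d : ℕ)
    (Γ : DTree Word) (hs : SolvesRecNondet L n Γ) (hd : Γ.DepthLe d) : n ≤ d := by
  by_contra hlt
  push_neg at hlt
  obtain ⟨a, ha⟩ := hhom n
  have hrep : List.replicate n a ∈ L := by
    refine hL _ ha _ ?_
    unfold homWord
    exact (List.sublist_append_left _ _).trans
      ((List.sublist_append_left _ _))
  obtain ⟨b, t, ht, hr⟩ := hs.2.2.1 (List.replicate n a) hrep (by simp)
  have hb : b = List.replicate n a := hs.2.2.2 _ hrep (by simp) b ⟨t, ht, hr⟩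
  subst hb
  obtain ⟨S, hcard, hstab⟩ := reach_stable t d hr (hd t ht)
  have hnsub : ¬ Finset.range n ⊆ S := by
    intro h
    have := Finset.card_le_card h
    simp at this; omega
  obtain ⟨j, hjn, hjS⟩ := Finset.not_subset.mp hnsub
  rw [Finset.mem_range] at hjn
  set w' : Word := (List.replicate n a).set j (!a) with hw'
  have hw'len : w'.length = n := by simp [hw']
  have hw'L : w' ∈ L := by
    refine hL _ ha _ ?_
    have hdecomp : w' = (List.replicate j a ++ [!a]) ++ List.replicate (n - j - 1) a := by
      rw [hw']
      have hn : (n : ℕ) = j + ((n - j - 1) + 1) := by omega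
      rw [hn, List.replicate_add, List.set_append_right _ _ (by simp)]
      simp [List.replicate_succ]
    rw [hdecomp]
    unfold homWord
    refine List.Sublist.append (List.Sublist.append ?_ (List.Sublist.refl _)) ?_
    · exact (List.replicate_sublist_replicate a).mpr (by omega)
    · exact (List.replicate_sublist_replicate a).mpr (by omega)
  have hreach' : Γ.Reaches w' (List.replicate n a) := by
    refine ⟨t, ht, hstab w' ?_⟩
    intro i hiS
    have hij : j ≠ i := fun h => hjS (h ▸ hiS)
    rw [hw', List.getD_eq_getElem?_getD, List.getElem?_set_ne hij,
      ← List.getD_eq_getElem?_getD]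
  have heq : List.replicate n a = w' := hs.2.2.2 w' hw'L hw'len _ hreach'
  have h1 : (List.replicate n a).getD j false = a := by
    rw [List.getD_eq_getElem?_getD, List.getElem?_eq_getElem (by simpa using hjn)]
    simp
  have h2 : w'.getD j false = !a := by
    rw [hw', List.getD_eq_getElem?_getD, List.getElem?_set_self (by simpa using hjn)]
    simp
  rw [heq, h2] at h1
  exact (Bool.not_ne_self a) h1

end Aux

/-- **Theorem 1(a).** If `L` is a binary subword-closed language with `Hom(L) = ∞`,
then for every `n` the minimum depths of decision trees solving the recognition
problem for `L(n)` deterministically and nondeterministically are both equal to `n`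
(in particular, `h_L^{rd}(n) = Θ(n)` and `h_L^{ra}(n) = Θ(n)`). -/
theorem recognition_hom_infinite (L : Set Word) (hL : SubwordClosed L)
    (hhom : HomInf L) :
    ∀ n : ℕ, hrd L n = n ∧ hra L n = n := by
  intro n
  obtain ⟨a, ha⟩ := hhom n
  have hrep : List.replicate n a ∈ L :=
    hL _ ha _ ((List.sublist_append_left _ _).trans (List.sublist_append_left _ _))
  have hne : LangAt L n ≠ ∅ := by
    intro h
    have : List.replicate n a ∈ LangAt L n := ⟨hrep, by simp⟩
    rw [h] at this; exact this
  obtain ⟨hsolve, hdepth⟩ := canonTree_solves (L := L) (n := n) ⟨_, hrep, by simp⟩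
  have hmemd : n ∈ {d : ℕ | ∃ Γ : DTree Word, SolvesRecDet L n Γ ∧ Γ.DepthLe d} :=
    ⟨canonTree L n, hsolve, hdepth⟩
  have hmema : n ∈ {d : ℕ | ∃ Γ : DTree Word, SolvesRecNondet L n Γ ∧ Γ.DepthLe d} :=
    ⟨canonTree L n, hsolve.2, hdepth⟩
  constructor
  · rw [hrd, if_neg hne]
    refine le_antisymm (Nat.sInf_le hmemd) (le_csInf ⟨n, hmemd⟩ ?_)
    rintro d ⟨Γ, hΓ, hdΓ⟩
    exact lower_bound hL hhom d Γ hΓ.2 hdΓ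
  · rw [hra, if_neg hne]
    refine le_antisymm (Nat.sInf_le hmema) (le_csInf ⟨n, hmema⟩ ?_)
    rintro d ⟨Γ, hΓ, hdΓ⟩
    exact lower_bound hL hhom d Γ hΓ hdΓ
end

section
/- Let L be a binary subword-closed language with Hom(L) < ∞ and Het(L) < ∞. Then h_L^{rd}(n) = O(1) and h_L^{ra}(n) = O(1); that is, there exists a constant c such that h_L^{rd}(n) ≤ c and h_L^{ra}(n) ≤ c for all natural n. -/
/-!
Fix `m` with `a^m ā a^m ∉ L` and `a^m ā^m ∉ L` for both letters `a`. A word with `2m`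
copies of each letter contains some `a^m ā^m`, so every `w ∈ L` has fewer than `2m` copies
of some letter `ā`; then every position of `w` with at least `3m` letters on each side
carries `a`, since otherwise `a^m ā a^m` is a subword of `w`. Hence a word of `L(n)` is
determined by its first `3m + 1` and last `3m` letters, and querying these `6m + 1`
positions solves recognition deterministically.
-/

namespace List

theorem append_sublist_of_sublist_take_drop {α : Type*} {x y w : List α} (k : ℕ)
    (hx : x.Sublist (w.take k)) (hy : y.Sublist (w.drop k)) : (x ++ y).Sublist w := by
  simpa using hx.append hy

theorem exists_count_take_eq {α : Type*} [BEq α] [LawfulBEq α] (a : α) :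
    ∀ (w : List α) {m : ℕ}, m ≤ w.count a → ∃ k, (w.take k).count a = m
  | [], m, h => ⟨0, by simp_all⟩
  | b :: w, 0, _ => ⟨0, rfl⟩
  | b :: w, m + 1, h => by
    by_cases hb : b = a
    · subst hb
      obtain ⟨k, hk⟩ := exists_count_take_eq b w (m := m) (by simpa using h)
      exact ⟨k + 1, by simp [hk]⟩
    · obtain ⟨k, hk⟩ :=
        exists_count_take_eq a w (m := m + 1) (by simpa [count_cons, hb] using h)
      exact ⟨k + 1, by simp [hb, hk]⟩

end List

theorem homWord_sublist_homWord {m m' : ℕ} (h : m ≤ m') (a : Bool) :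
    (homWord m a).Sublist (homWord m' a) :=
  ((List.replicate_sublist_replicate a).2 h |>.append (List.Sublist.refl _)).append
    ((List.replicate_sublist_replicate a).2 h)

theorem hetWord_sublist_hetWord {m m' : ℕ} (h : m ≤ m') (a : Bool) :
    (hetWord m a).Sublist (hetWord m' a) :=
  ((List.replicate_sublist_replicate a).2 h).append ((List.replicate_sublist_replicate _).2 h)

theorem exists_hetWord_sublist {w : Word} {m : ℕ} (ht : 2 * m ≤ w.count true)
    (hf : 2 * m ≤ w.count false) : ∃ a, (hetWord m a).Sublist w := by
  obtain ⟨k, hk⟩ := List.exists_count_take_eq true w (m := m) (by omega)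
  have htrue : (w.take k).count true + (w.drop k).count true = w.count true := by
    rw [← List.count_append, List.take_append_drop]
  have hfalse : (w.take k).count false + (w.drop k).count false = w.count false := by
    rw [← List.count_append, List.take_append_drop]
  -- Cut `w` after its `m`-th `true`; the prefix or the suffix then holds `m` letters `false`.
  rcases le_or_gt m ((w.take k).count false) with hpre | hpre
  · exact ⟨false, List.append_sublist_of_sublist_take_drop k
      (List.replicate_sublist_iff.2 hpre)
      (List.replicate_sublist_iff.2 (by rw [Bool.not_false]; omega))⟩
  · exact ⟨true, List.append_sublist_of_sublist_take_drop k
      (List.replicate_sublist_iff.2 hk.ge)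
      (List.replicate_sublist_iff.2 (by rw [Bool.not_true]; omega))⟩

theorem homWord_sublist_of_getElem_eq {w : Word} {m k : ℕ} {a : Bool} (hk : k < w.length)
    (hwk : w[k] = !a) (hpre : m ≤ (w.take k).count a) (hsuf : m ≤ (w.drop (k + 1)).count a) :
    (homWord m a).Sublist w := by
  rw [homWord, List.append_assoc]
  refine List.append_sublist_of_sublist_take_drop k (List.replicate_sublist_iff.2 hpre) ?_
  rw [List.drop_eq_getElem_cons hk, hwk]
  exact (List.replicate_sublist_iff.2 hsuf).cons_cons _

namespace SubwordClosed

variable {L : Set Word}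

theorem exists_homWord_hetWord_not_mem (hL : SubwordClosed L) (hhom : ¬ HomInf L)
    (hhet : ¬ HetInf L) :
    ∃ m, ∀ a, homWord m a ∉ L ∧ hetWord m a ∉ L := by
  simp only [HomInf, HetInf, not_forall, not_exists] at hhom hhet
  obtain ⟨m₁, hm₁⟩ := hhom
  obtain ⟨m₂, hm₂⟩ := hhet
  exact ⟨max m₁ m₂, fun a =>
    ⟨fun h => hm₁ a (hL _ h _ (homWord_sublist_homWord (le_max_left m₁ m₂) a)),
     fun h => hm₂ a (hL _ h _ (hetWord_sublist_hetWord (le_max_right m₁ m₂) a))⟩⟩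

variable {m : ℕ}

theorem exists_count_not_lt (hL : SubwordClosed L)
    (hforb : ∀ a, homWord m a ∉ L ∧ hetWord m a ∉ L) {w : Word} (hw : w ∈ L) :
    ∃ a, w.count (!a) < 2 * m := by
  by_contra! h
  obtain ⟨a, ha⟩ := exists_hetWord_sublist (by simpa using h false) (by simpa using h true)
  exact (hforb a).2 (hL w hw _ ha)

theorem exists_getElem_eq_of_middle (hL : SubwordClosed L)
    (hforb : ∀ a, homWord m a ∉ L ∧ hetWord m a ∉ L) {w : Word} (hw : w ∈ L) :
    ∃ a, ∀ k (hk : k < w.length), 3 * m ≤ k → k + 3 * m < w.length → w[k] = a := by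
  obtain ⟨a, ha⟩ := exists_count_not_lt hL hforb hw
  refine ⟨a, fun k hk hpre hsuf => ?_⟩
  by_contra hwk
  -- Few letters `!a` in all of `w` leave at least `m` letters `a` on each side of position `k`.
  have hc_take := List.count_add_count_not (w.take k) a
  have hc_drop := List.count_add_count_not (w.drop (k + 1)) a
  have h_take := (List.take_sublist k w).count_le (!a)
  have h_drop := (List.drop_sublist (k + 1) w).count_le (!a)
  simp only [List.length_take, List.length_drop] at hc_take hc_drop
  refine (hforb a).1 (hL w hw _ (homWord_sublist_of_getElem_eq hk ?_ ?_ ?_))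
  · simpa [Bool.eq_not_iff] using hwk
  · omega
  · omega

end SubwordClosed

def mergeOn (qs : List ℕ) (w : Word) (g : ℕ → Bool) : ℕ → Bool :=
  fun x => if x ∈ qs then w.getD x false else g x

theorem mergeOn_nil (w : Word) (g : ℕ → Bool) : mergeOn [] w g = g := by
  funext x
  simp [mergeOn]

theorem mergeOn_cons (i : ℕ) (qs : List ℕ) (w : Word) (g : ℕ → Bool) :
    mergeOn (i :: qs) w g = mergeOn qs w (Function.update g i (w.getD i false)) := by
  funext x
  by_cases hx : x = i
  · subst hx; simp [mergeOn]
  · simp [mergeOn, hx]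

namespace NTree

variable {β : Type}

/-- `g` records the answers to the queries made so far. -/
def queryTree (f : (ℕ → Bool) → β) : List ℕ → (ℕ → Bool) → NTree β
  | [], g => leaf (f g)
  | i :: qs, g => node i [(true, queryTree f qs (Function.update g i true)),
                          (false, queryTree f qs (Function.update g i false))]

variable (f : (ℕ → Bool) → β)

theorem bounded_queryTree {n : ℕ} :
    ∀ {qs : List ℕ}, (∀ i ∈ qs, i < n) → ∀ g, Bounded n (queryTree f qs g)
  | [], _, g => .leaf _
  | i :: qs, h, g => .node _ _ (h i (by simp)) fun p hp => by
      rcases List.mem_pair.1 hp with rfl | rfl <;>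
        exact bounded_queryTree (fun j hj => h j (by simp [hj])) _

theorem det_queryTree : ∀ (qs : List ℕ) g, Det (queryTree f qs g)
  | [], g => .leaf _
  | i :: qs, g => .node _ _ (by simp) fun p hp => by
      rcases List.mem_pair.1 hp with rfl | rfl <;> exact det_queryTree qs _

theorem depthLe_queryTree : ∀ (qs : List ℕ) g, DepthLe (queryTree f qs g) qs.length
  | [], g => .leaf _ _
  | i :: qs, g => .node _ _ _ fun p hp => by
      rcases List.mem_pair.1 hp with rfl | rfl <;> exact depthLe_queryTree qs _

theorem exists_eq_of_leafLabel_queryTree :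
    ∀ {qs : List ℕ} {g} {b : β}, LeafLabel (queryTree f qs g) b → ∃ g', b = f g'
  | [], g, _, .leaf _ => ⟨g, rfl⟩
  | i :: qs, g, b, .node _ _ p _ hp hb => by
      rcases List.mem_pair.1 hp with rfl | rfl <;> exact exists_eq_of_leafLabel_queryTree hb

theorem reaches_queryTree_iff (w : Word) :
    ∀ (qs : List ℕ) g (b : β), Reaches w (queryTree f qs g) b ↔ b = f (mergeOn qs w g)
  | [], g, b => by
    rw [mergeOn_nil]
    exact ⟨fun | .leaf _ => rfl, fun h => h ▸ .leaf _⟩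
  | i :: qs, g, b => by
    rw [mergeOn_cons, ← reaches_queryTree_iff w qs]
    constructor
    · rintro (_ | ⟨_, _, p, _, hp, hwi, hr⟩)
      rcases List.mem_pair.1 hp with rfl | rfl <;> rwa [hwi]
    · intro hr
      exact .node _ _ (w.getD i false, _) _ (by cases w.getD i false <;> simp) rfl hr

theorem DepthLe.mono {t : NTree β} {d d' : ℕ} (h : DepthLe t d) (hd : d ≤ d') :
    DepthLe t d' := by
  induction h generalizing d' with
  | leaf b d => exact .leaf _ _
  | node i cs d _ ih =>
    obtain ⟨e, rfl⟩ : ∃ e, d' = e + 1 := ⟨d' - 1, by omega⟩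
    exact .node _ _ _ fun p hp => ih p hp (by omega)

end NTree

def DeterminedOn (L : Set Word) (n : ℕ) (Q : Finset ℕ) : Prop :=
  ∀ w ∈ LangAt L n, ∀ v ∈ LangAt L n,
    (∀ i ∈ Q, w.getD i false = v.getD i false) → w = v

section Recognition

variable {L : Set Word} {n : ℕ} {Q : Finset ℕ}

theorem DeterminedOn.exists_decoder (hQ : DeterminedOn L n Q) (hne : (LangAt L n).Nonempty) :
    ∃ f : (ℕ → Bool) → Word, (∀ g, f g ∈ LangAt L n) ∧
      ∀ w ∈ LangAt L n, ∀ g, (∀ i ∈ Q, g i = w.getD i false) → f g = w := by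
  have key : ∀ g : ℕ → Bool, ∃ u ∈ LangAt L n,
      ∀ w ∈ LangAt L n, (∀ i ∈ Q, g i = w.getD i false) → u = w := by
    intro g
    by_cases h : ∃ u ∈ LangAt L n, ∀ i ∈ Q, g i = u.getD i false
    · obtain ⟨u, hu, hug⟩ := h
      exact ⟨u, hu, fun w hw hwg => hQ u hu w hw fun i hi => (hug i hi).symm.trans (hwg i hi)⟩
    · obtain ⟨u, hu⟩ := hne
      exact ⟨u, hu, fun w hw hwg => absurd ⟨w, hw, hwg⟩ h⟩
  choose f hf using key
  exact ⟨f, fun g => (hf g).1, fun w hw g hwg => (hf g).2 w hw hwg⟩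

theorem DeterminedOn.exists_solvesRecDet (hQ : DeterminedOn L n Q) (hQn : ∀ i ∈ Q, i < n)
    (hne : (LangAt L n).Nonempty) :
    ∃ Γ : DTree Word, SolvesRecDet L n Γ ∧ Γ.DepthLe Q.card := by
  obtain ⟨f, hf, hfw⟩ := hQ.exists_decoder hne
  have hreaches : ∀ w b, NTree.Reaches w (NTree.queryTree f Q.toList fun _ => false) b ↔
      b = f (mergeOn Q.toList w fun _ => false) :=
    fun w b => NTree.reaches_queryTree_iff f w _ _ b
  have hmerge : ∀ w : Word, ∀ i ∈ Q, mergeOn Q.toList w (fun _ => false) i = w.getD i false :=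
    fun w i hi => if_pos (Finset.mem_toList.2 hi)
  refine ⟨⟨[NTree.queryTree f Q.toList fun _ => false]⟩,
    ⟨⟨rfl, by simp [NTree.det_queryTree]⟩, ?bounded, ?leaves, ?complete, ?sound⟩, ?depth⟩
  case bounded =>
    simpa [DTree.Bounded] using
      NTree.bounded_queryTree f (fun i hi => hQn i (Finset.mem_toList.1 hi)) _
  case leaves =>
    rintro b ⟨t, ht, hb⟩
    obtain rfl := List.mem_singleton.1 ht
    obtain ⟨g, rfl⟩ := NTree.exists_eq_of_leafLabel_queryTree f hb
    exact hf g
  case complete =>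
    exact fun w _ _ => ⟨_, _, List.mem_singleton_self _, (hreaches w _).2 rfl⟩
  case sound =>
    rintro w hw hwn b ⟨t, ht, hb⟩
    obtain rfl := List.mem_singleton.1 ht
    rw [(hreaches w b).1 hb]
    exact hfw w ⟨hw, hwn⟩ _ (hmerge w)
  case depth =>
    simpa [DTree.DepthLe, Finset.length_toList] using NTree.depthLe_queryTree f Q.toList _

end Recognition

theorem hrd_le_and_hra_le {L : Set Word} {n d : ℕ}
    (h : (LangAt L n).Nonempty → ∃ Γ : DTree Word, SolvesRecDet L n Γ ∧ Γ.DepthLe d) :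
    hrd L n ≤ d ∧ hra L n ≤ d := by
  unfold hrd hra
  split_ifs with hemp
  · simp
  · obtain ⟨Γ, hΓ, hd⟩ := h (Set.nonempty_iff_ne_empty.2 hemp)
    exact ⟨Nat.sInf_le ⟨Γ, hΓ, hd⟩, Nat.sInf_le ⟨Γ, hΓ.2, hd⟩⟩

theorem DTree.DepthLe.mono {β : Type} {Γ : DTree β} {d d' : ℕ} (h : Γ.DepthLe d)
    (hd : d ≤ d') : Γ.DepthLe d' :=
  fun t ht => (h t ht).mono hd

def window (m n : ℕ) : Finset ℕ :=
  (Finset.range n).filter fun i => i ≤ 3 * m ∨ n ≤ i + 3 * m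

theorem lt_of_mem_window {m n i : ℕ} (hi : i ∈ window m n) : i < n :=
  Finset.mem_range.1 (Finset.mem_filter.1 hi).1

theorem card_window_le (m n : ℕ) : (window m n).card ≤ 6 * m + 1 := by
  have hsub : window m n ⊆ Finset.range (3 * m + 1) ∪ Finset.Ico (n - 3 * m) n := by
    intro i hi
    simp only [window, Finset.mem_filter, Finset.mem_range] at hi
    simp only [Finset.mem_union, Finset.mem_range, Finset.mem_Ico]
    omega
  calc (window m n).card
      ≤ (Finset.range (3 * m + 1)).card + (Finset.Ico (n - 3 * m) n).card :=
        (Finset.card_le_card hsub).trans (Finset.card_union_le _ _)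
    _ ≤ 6 * m + 1 := by simp only [Finset.card_range, Nat.card_Ico]; omega

theorem SubwordClosed.determinedOn_window {L : Set Word} (hL : SubwordClosed L) {m : ℕ}
    (hforb : ∀ a, homWord m a ∉ L ∧ hetWord m a ∉ L) (n : ℕ) :
    DeterminedOn L n (window m n) := by
  rintro w ⟨hw, hwn⟩ v ⟨hv, hvn⟩ hagree
  replace hagree : ∀ j ∈ window m n, ∀ (hjw : j < w.length) (hjv : j < v.length),
      w[j] = v[j] := fun j hj hjw hjv => by
    simpa [List.getD_eq_getElem, hjw, hjv] using hagree j hj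
  obtain ⟨a, ha⟩ := hL.exists_getElem_eq_of_middle hforb hw
  obtain ⟨b, hb⟩ := hL.exists_getElem_eq_of_middle hforb hv
  refine List.ext_getElem (hwn.trans hvn.symm) fun i hiw hiv => ?_
  by_cases hi : i ∈ window m n
  · exact hagree i hi hiw hiv
  -- Outside the window lies the constant middle block, which also contains position `3m`.
  simp only [window, Finset.mem_filter, Finset.mem_range, not_and, not_or, not_le] at hi
  have hmid := hi (hwn ▸ hiw)
  have h3m : 3 * m ∈ window m n := by simp [window]; omega
  rw [ha i hiw (by omega) (by omega), hb i hiv (by omega) (by omega),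
    ← ha (3 * m) (by omega) le_rfl (by omega), ← hb (3 * m) (by omega) le_rfl (by omega)]
  exact hagree _ h3m _ _

/-- **Theorem 1(c).** If `L` is a binary subword-closed language with `Hom(L) < ∞`
and `Het(L) < ∞`, then `h_L^{rd}(n) = O(1)` and `h_L^{ra}(n) = O(1)`. -/
theorem recognition_hom_finite_het_finite (L : Set Word) (hL : SubwordClosed L)
    (hhom : ¬ HomInf L) (hhet : ¬ HetInf L) :
    ∃ c : ℕ, ∀ n : ℕ, hrd L n ≤ c ∧ hra L n ≤ c := by
  obtain ⟨m, hforb⟩ := hL.exists_homWord_hetWord_not_mem hhom hhet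
  refine ⟨6 * m + 1, fun n => hrd_le_and_hra_le fun hne => ?_⟩
  obtain ⟨Γ, hΓ, hdepth⟩ := (hL.determinedOn_window hforb n).exists_solvesRecDet
    (fun _ => lt_of_mem_window) hne
  exact ⟨Γ, hΓ, hdepth.mono (card_window_le m n)⟩
end

section
/- Let L be a binary subword-closed language that is infinite and whose complement L^C = E* \ L is nonempty. Then h_L^{md}(n) = Θ(n) and h_L^{ma}(n) = Θ(n); more precisely, if w₀ is a word of minimum length in L^C, then for every natural n > |w₀| one has h_L^{ma}(n) > n − |w₀|, and h_L^{md}(n) ≤ n for all natural n. -/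
/-! A nondeterministic tree of depth `d` accepts a word `w ∈ L(n)` along a path that queries at
most `d` positions, so it accepts every word of length `n` agreeing with `w` on those positions.
If `d + |w₀| ≤ n`, the remaining free positions can be filled so that `w₀` becomes a subword of
such a word, which then lies in `L`; subword-closedness forces `w₀ ∈ L`. Hence
`h_L^{ma}(n) > n - |w₀|`, while querying every position gives `h_L^{md}(n) ≤ n`. -/

theorem SubwordClosed.langAt_nonempty {L : Set Word} (hL : SubwordClosed L) (hinf : L.Infinite)
    (n : ℕ) : (LangAt L n).Nonempty := by
  obtain ⟨w, hwL, hnw⟩ : ∃ w ∈ L, n ≤ w.length := by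
    by_contra! hshort
    exact hinf ((List.finite_length_lt Bool n).subset hshort)
  exact ⟨w.take n, hL w hwL _ (List.take_sublist n w), by simp [hnw]⟩

theorem exists_sublist_agreeOn (u w : Word) (Q : Finset ℕ) (h : u.length + Q.card ≤ w.length) :
    ∃ w' : Word, w'.length = w.length ∧ u.Sublist w' ∧
      ∀ i ∈ Q, w'.getD i false = w.getD i false := by
  induction w generalizing u Q with
  | nil => exact ⟨[], rfl, by simp_all, fun _ _ => rfl⟩
  | cons a w ih =>
    obtain _ | ⟨c, u⟩ := u
    · exact ⟨a :: w, rfl, List.nil_sublist _, fun _ _ => rfl⟩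
    set Q' := Q.preimage Nat.succ Nat.succ_injective.injOn
    have hQ' : Q'.card ≤ (Q.erase 0).card :=
      Finset.card_le_card_of_injOn Nat.succ
        (fun i hi => Finset.mem_erase.2 ⟨i.succ_ne_zero, Finset.mem_preimage.1 hi⟩)
        Nat.succ_injective.injOn
    have agree : ∀ (x : Bool) (w' : Word), (0 ∈ Q → x = a) →
        (∀ i ∈ Q', w'.getD i false = w.getD i false) →
        ∀ i ∈ Q, (x :: w').getD i false = (a :: w).getD i false := by
      rintro x w' hx hw' (_ | i) hi
      · exact hx hi
      · exact hw' i (Finset.mem_preimage.2 hi)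
    by_cases h0 : 0 ∈ Q
    · rw [Finset.card_erase_of_mem h0] at hQ'
      have hQ : 0 < Q.card := Finset.card_pos.2 ⟨0, h0⟩
      obtain ⟨w', hlen, hsub, hw'⟩ :=
        ih (c :: u) Q' (by simp only [List.length_cons] at h ⊢; omega)
      exact ⟨a :: w', by simp [hlen], hsub.cons a, agree a w' (fun _ => rfl) hw'⟩
    · rw [Finset.erase_eq_of_notMem h0] at hQ'
      obtain ⟨w', hlen, hsub, hw'⟩ := ih u Q' (by simp only [List.length_cons] at h; omega)
      exact ⟨c :: w', by simp [hlen], hsub.cons_cons c, agree c w' (absurd · h0) hw'⟩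

namespace NTree

variable {β : Type}

theorem reaches_leaf_iff {w : Word} {a b : β} : Reaches w (leaf a) b ↔ b = a :=
  ⟨fun h => by cases h; rfl, fun h => h ▸ .leaf b⟩

theorem reaches_node_iff {w : Word} {i : ℕ} {cs : List (Bool × NTree β)} {b : β} :
    Reaches w (node i cs) b ↔ ∃ p ∈ cs, w.getD i false = p.1 ∧ Reaches w p.2 b :=
  ⟨fun h => by cases h with | node _ _ p _ hp hi hr => exact ⟨p, hp, hi, hr⟩,
    fun ⟨p, hp, hi, hr⟩ => .node i cs p b hp hi hr⟩

theorem Reaches.exists_certificate {t : NTree β} {w : Word} {b : β} (h : Reaches w t b)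
    {d : ℕ} (hd : DepthLe t d) :
    ∃ Q : Finset ℕ, Q.card ≤ d ∧
      ∀ w' : Word, (∀ i ∈ Q, w'.getD i false = w.getD i false) → Reaches w' t b := by
  induction h generalizing d with
  | leaf b => exact ⟨∅, by simp, fun _ _ => .leaf b⟩
  | node i cs p b hp hi _ ih =>
    obtain _ | ⟨_, _, d, hd⟩ := hd
    obtain ⟨Q, hQ, hcert⟩ := ih (hd p hp)
    refine ⟨insert i Q, (Finset.card_insert_le i Q).trans (by omega), fun w' hw' => ?_⟩
    refine .node i cs p b hp ?_ (hcert w' fun j hj => hw' j (Finset.mem_insert_of_mem hj))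
    rw [hw' i (Finset.mem_insert_self i Q), hi]

def fullTree (f : Word → β) : ℕ → Word → NTree β
  | 0, acc => leaf (f acc)
  | k + 1, acc =>
    node acc.length [(false, fullTree f k (acc ++ [false])), (true, fullTree f k (acc ++ [true]))]

variable (f : Word → β)

theorem fullTree_bounded {n : ℕ} (k : ℕ) (acc : Word) (h : acc.length + k ≤ n) :
    Bounded n (fullTree f k acc) := by
  induction k generalizing acc with
  | zero => exact .leaf _
  | succ k ih =>
    refine .node _ _ (by omega) ?_
    simp only [List.mem_cons, List.not_mem_nil, or_false]
    rintro _ (rfl | rfl) <;> exact ih _ (by simp; omega)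

theorem fullTree_det (k : ℕ) (acc : Word) : Det (fullTree f k acc) := by
  induction k generalizing acc with
  | zero => exact .leaf _
  | succ k ih =>
    refine .node _ _ (by simp) ?_
    simp only [List.mem_cons, List.not_mem_nil, or_false]
    rintro _ (rfl | rfl) <;> exact ih _

theorem fullTree_depthLe (k : ℕ) (acc : Word) : DepthLe (fullTree f k acc) k := by
  induction k generalizing acc with
  | zero => exact .leaf _ _
  | succ k ih =>
    refine .node _ _ _ ?_
    simp only [List.mem_cons, List.not_mem_nil, or_false]
    rintro _ (rfl | rfl) <;> exact ih _

theorem reaches_fullTree_iff {k : ℕ} {acc w : Word} (h : acc.length + k = w.length) {b : β} :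
    Reaches w (fullTree f k acc) b ↔ b = f (acc ++ w.drop acc.length) := by
  induction k generalizing acc with
  | zero =>
    simp [fullTree, reaches_leaf_iff, List.drop_eq_nil_of_le (by omega : w.length ≤ acc.length)]
  | succ k ih =>
    have hlt : acc.length < w.length := by omega
    have hdrop : w.drop acc.length = w.getD acc.length false :: w.drop (acc.length + 1) := by
      rw [List.drop_eq_getElem_cons hlt, List.getD_eq_getElem _ _ hlt]
    rw [fullTree, reaches_node_iff, hdrop]
    cases w.getD acc.length false <;> simp [ih (acc := acc ++ [_]) (by simp; omega)]

end NTree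

open Classical in
theorem exists_solvesMemDet_depthLe (L : Set Word) (n : ℕ) :
    ∃ Γ : DTree Bool, SolvesMemDet L n Γ ∧ Γ.DepthLe n := by
  let t := NTree.fullTree (fun w => decide (w ∈ L)) n []
  have hreaches : ∀ w : Word, w.length = n → ∀ b, t.Reaches w b ↔ b = decide (w ∈ L) :=
    fun w hw _ => by simpa using NTree.reaches_fullTree_iff _ (acc := []) (by simp [hw])
  refine ⟨⟨[t]⟩, ⟨⟨rfl, ?_⟩, ?_, fun w hw => ?_, fun w hw b hb => ?_⟩, ?_⟩ <;>
    simp only [DTree.Bounded, DTree.Reaches, DTree.DepthLe, List.mem_singleton,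
      forall_eq, exists_eq_left] at *
  · exact NTree.fullTree_det _ n []
  · exact NTree.fullTree_bounded _ n [] (by simp)
  · exact ⟨_, (hreaches w hw _).2 rfl⟩
  · simp [(hreaches w hw b).1 hb]
  · exact NTree.fullTree_depthLe _ n []

theorem SolvesMemNondet.lt_length_add_depth {L : Set Word} (hL : SubwordClosed L) {w w₀ : Word}
    (hw : w ∈ L) (hw₀ : w₀ ∉ L) {Γ : DTree Bool} (hΓ : SolvesMemNondet L w.length Γ) {d : ℕ}
    (hd : Γ.DepthLe d) : w.length < w₀.length + d := by
  by_contra! hshort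
  obtain ⟨_, hcomplete, hcorrect⟩ := hΓ
  obtain ⟨b, t, ht, hwt⟩ := hcomplete w rfl
  obtain rfl : b = true := (hcorrect w rfl b ⟨t, ht, hwt⟩).2 hw
  obtain ⟨Q, hQ, hcert⟩ := hwt.exists_certificate (hd t ht)
  obtain ⟨w', hlen, hsub, hagree⟩ := exists_sublist_agreeOn w₀ w Q (by omega)
  have hw'L : w' ∈ L := (hcorrect w' hlen true ⟨t, ht, hcert w' hagree⟩).1 rfl
  exact hw₀ (hL w' hw'L w₀ hsub)

theorem hmd_le (L : Set Word) (n : ℕ) : hmd L n ≤ n := by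
  obtain ⟨Γ, hΓ, hd⟩ := exists_solvesMemDet_depthLe L n
  unfold hmd
  split_ifs
  exacts [Nat.zero_le n, Nat.sInf_le ⟨Γ, hΓ, hd⟩]

theorem hma_le_hmd (L : Set Word) (n : ℕ) : hma L n ≤ hmd L n := by
  obtain ⟨Γ, hΓ, hd⟩ := exists_solvesMemDet_depthLe L n
  unfold hma hmd
  split_ifs
  · exact le_rfl
  · have hne : {d | ∃ Γ : DTree Bool, SolvesMemDet L n Γ ∧ Γ.DepthLe d}.Nonempty :=
      ⟨n, Γ, hΓ, hd⟩
    obtain ⟨Γ', hΓ', hd'⟩ := Nat.sInf_mem hne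
    exact Nat.sInf_le ⟨Γ', hΓ'.2, hd'⟩

theorem lt_length_add_hma {L : Set Word} (hL : SubwordClosed L) (hinf : L.Infinite) {w₀ : Word}
    (hw₀ : w₀ ∉ L) (n : ℕ) : n < w₀.length + hma L n := by
  have hLn := hL.langAt_nonempty hinf n
  obtain ⟨Γ, hΓ, hd⟩ := exists_solvesMemDet_depthLe L n
  have hne : {d | ∃ Γ : DTree Bool, SolvesMemNondet L n Γ ∧ Γ.DepthLe d}.Nonempty :=
    ⟨n, Γ, hΓ.2, hd⟩
  obtain ⟨Γ', hΓ', hd'⟩ := Nat.sInf_mem hne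
  rw [hma, if_neg hLn.ne_empty]
  obtain ⟨w, hw, rfl⟩ := hLn
  exact hΓ'.lt_length_add_depth hL hw hw₀ hd'

theorem membership_infinite_proper_general (L : Set Word) (hL : SubwordClosed L)
    (hinf : L.Infinite) (w₀ : Word) (hw₀ : w₀ ∉ L) :
    (∃ c : ℝ, 0 < c ∧ ∃ N : ℕ, ∀ n : ℕ, N ≤ n →
        c * n ≤ (hmd L n : ℝ) ∧ c * n ≤ (hma L n : ℝ) ∧ hmd L n ≤ n ∧ hma L n ≤ n) ∧
    (∀ n : ℕ, w₀.length < n → n - w₀.length < hma L n) ∧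
    (∀ n : ℕ, hmd L n ≤ n) := by
  set m := w₀.length
  have hlower := lt_length_add_hma hL hinf hw₀
  refine ⟨⟨((m : ℝ) + 1)⁻¹, by positivity, m, fun n hn => ?_⟩,
    fun n _ => by have := hlower n; omega, hmd_le L⟩
  have hma_hmd := hma_le_hmd L n
  have hlinear : ((m : ℝ) + 1)⁻¹ * n ≤ hma L n := by
    rw [inv_mul_le_iff₀ (by positivity)]
    -- `n < m + h` and `m ≤ n` force `h ≥ 1`, so `n < m * h + h`.
    exact_mod_cast (show n ≤ (m + 1) * hma L n by nlinarith [hlower n])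
  exact ⟨hlinear.trans (by exact_mod_cast hma_hmd), hlinear, hmd_le L n,
    hma_hmd.trans (hmd_le L n)⟩

/-- **Theorem 2(a).** If `L` is an infinite binary subword-closed language whose
complement is nonempty, then `h_L^{md}(n) = Θ(n)` and `h_L^{ma}(n) = Θ(n)`; more
precisely, if `w₀` is a word of minimum length not belonging to `L`, then
`h_L^{ma}(n) > n - |w₀|` for every `n > |w₀|`, and `h_L^{md}(n) ≤ n` for all `n`. -/
theorem membership_infinite_proper (L : Set Word) (hL : SubwordClosed L)
    (hinf : L.Infinite) (w₀ : Word) (hw₀ : w₀ ∉ L)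
    (hmin : ∀ u : Word, u ∉ L → w₀.length ≤ u.length) :
    (∃ c : ℝ, 0 < c ∧ ∃ N : ℕ, ∀ n : ℕ, N ≤ n →
        c * n ≤ (hmd L n : ℝ) ∧ c * n ≤ (hma L n : ℝ) ∧ hmd L n ≤ n ∧ hma L n ≤ n) ∧
    (∀ n : ℕ, w₀.length < n → n - w₀.length < hma L n) ∧
    (∀ n : ℕ, hmd L n ≤ n) :=
  membership_infinite_proper_general L hL hinf w₀ hw₀
end

section
/- Let L be a binary subword-closed language and m a natural number such that neither the word 0^{m+1}·1·0^{m+1} nor the word 1^{m+1}·0·1^{m+1} belongs to L (i.e., Hom(L) ≤ m). Then every word w ∈ L can be written in the form w = w₁ · a^i · w₂ · ā^j · w₃, where a ∈ E, i, j are natural numbers (possibly zero), and w₁, w₂, w₃ are binary words each of length at most 2m. -/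
open List

def IsDecomposable (m : ℕ) (w : Word) : Prop :=
  ∃ (a : Bool) (i j : ℕ) (w₁ w₂ w₃ : Word),
    w = w₁ ++ replicate i a ++ w₂ ++ replicate j (!a) ++ w₃ ∧
    w₁.length ≤ 2 * m ∧ w₂.length ≤ 2 * m ∧ w₃.length ≤ 2 * m

section Blocks

variable {a : Bool} {k m : ℕ}

lemma length_le_of_count_le {w : Word} (h : w.count a ≤ m) (h' : w.count (!a) ≤ m) :
    w.length ≤ 2 * m := by
  have := count_not_add_count w a
  omega

lemma homWord_sublist_append {u c v : Word} (hu : k ≤ u.count a) (hc : (!a) ∈ c)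
    (hv : k ≤ v.count a) : homWord k a <+ u ++ c ++ v :=
  ((replicate_sublist_iff.mpr hu).append (singleton_sublist.mpr hc)).append
    (replicate_sublist_iff.mpr hv)

lemma exists_eq_replicate_append_of_not_sublist {y : Word}
    (h : ¬ (!a) :: replicate (m + 1) a <+ y) :
    ∃ (i : ℕ) (q : Word), y = replicate i a ++ q ∧ q.count a ≤ m := by
  induction y with
  | nil => exact ⟨0, [], rfl, by simp⟩
  | cons b t ih =>
    by_cases hb : b = a
    · subst hb
      obtain ⟨i, q, rfl, hq⟩ := ih fun hs => h (hs.cons _)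
      exact ⟨i + 1, q, by simp [replicate_succ], hq⟩
    · obtain rfl : b = !a := Bool.eq_not.mpr hb
      refine ⟨0, (!a) :: t, rfl, ?_⟩
      by_contra! ht
      exact h ((replicate_sublist_iff.mpr (by simpa using ht : m < t.count a)).cons_cons _)

lemma exists_eq_append_replicate_append_of_not_sublist {w : Word}
    (h : ¬ replicate (k + 1) a ++ (!a) :: replicate (m + 1) a <+ w) :
    ∃ (x : Word) (i : ℕ) (y : Word),
      w = x ++ replicate i a ++ y ∧ x.count a ≤ k ∧ y.count a ≤ m := by
  induction w generalizing k with
  | nil => exact ⟨[], 0, [], rfl, by simp, by simp⟩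
  | cons b t ih =>
    by_cases hb : b = a
    · subst hb
      cases k with
      | zero =>
        obtain ⟨i, q, rfl, hq⟩ :=
          exists_eq_replicate_append_of_not_sublist fun hs => h (by simpa using hs.cons_cons b)
        exact ⟨[], i + 1, q, by simp [replicate_succ], by simp, hq⟩
      | succ k =>
        obtain ⟨x, i, y, rfl, hx, hy⟩ :=
          ih fun hs => h (by simpa [replicate_succ] using hs.cons_cons b)
        exact ⟨b :: x, i, y, rfl, by simpa using hx, hy⟩
    · obtain ⟨x, i, y, rfl, hx, hy⟩ := ih fun hs => h (hs.cons b)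
      exact ⟨b :: x, i, y, rfl, by simpa [count_cons, hb] using hx, hy⟩

lemma exists_eq_append_replicate_append_of_not_homWord_sublist {w : Word}
    (h : ¬ homWord (m + 1) a <+ w) :
    ∃ (x : Word) (i : ℕ) (y : Word),
      w = x ++ replicate i a ++ y ∧ x.count a ≤ m ∧ y.count a ≤ m :=
  exists_eq_append_replicate_append_of_not_sublist (by simpa [homWord] using h)

end Blocks

section Decomposition

variable {a : Bool} {m i : ℕ} {x y : Word}

lemma isDecomposable_of_count_not_le_left (h : ¬ homWord (m + 1) (!a) <+ y)
    (hx : x.count a ≤ m) (hx' : x.count (!a) ≤ m) (hy : y.count a ≤ m) :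
    IsDecomposable m (x ++ replicate i a ++ y) := by
  obtain ⟨u, j, v, rfl, hu, hv⟩ := exists_eq_append_replicate_append_of_not_homWord_sublist h
  have huv : u.count a + v.count a ≤ m := by simpa [count_replicate] using hy
  refine ⟨a, i, j, x, u, v, by simp, length_le_of_count_le hx hx', ?_, ?_⟩
  · exact length_le_of_count_le (by omega) hu
  · exact length_le_of_count_le (by omega) hv

lemma isDecomposable_of_count_not_le_right (h : ¬ homWord (m + 1) (!a) <+ x)
    (hx : x.count a ≤ m) (hy : y.count a ≤ m) (hy' : y.count (!a) ≤ m) :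
    IsDecomposable m (x ++ replicate i a ++ y) := by
  obtain ⟨u, j, v, rfl, hu, hv⟩ := exists_eq_append_replicate_append_of_not_homWord_sublist h
  have huv : u.count a + v.count a ≤ m := by simpa [count_replicate] using hx
  refine ⟨!a, j, i, u, v, y, by simp, ?_, ?_, length_le_of_count_le hy hy'⟩
  · exact length_le_of_count_le hu (by rw [Bool.not_not]; omega)
  · exact length_le_of_count_le hv (by rw [Bool.not_not]; omega)

lemma isDecomposable_of_count_not_le (h : ¬ homWord (m + 1) (!a) <+ x ++ replicate i a ++ y)
    (hx : x.count a ≤ m) (hy : y.count a ≤ m)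
    (hxy : x.count (!a) ≤ m ∨ y.count (!a) ≤ m) :
    IsDecomposable m (x ++ replicate i a ++ y) := by
  rcases hxy with hx' | hy'
  · exact isDecomposable_of_count_not_le_left
      (fun hs => h (hs.trans (sublist_append_right _ _))) hx hx' hy
  · exact isDecomposable_of_count_not_le_right
      (fun hs => h (hs.trans ((sublist_append_left _ _).trans (sublist_append_left _ _)))) hx hy hy'

theorem isDecomposable_of_not_homWord_sublist {w : Word}
    (h0 : ¬ homWord (m + 1) false <+ w) (h1 : ¬ homWord (m + 1) true <+ w) :
    IsDecomposable m w := by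
  obtain ⟨x, i, y, rfl, hx, hy⟩ := exists_eq_append_replicate_append_of_not_homWord_sublist h0
  by_cases hxy : x.count true ≤ m ∨ y.count true ≤ m
  · exact isDecomposable_of_count_not_le h1 hx hy hxy
  push Not at hxy
  have hi : i = 0 := by
    by_contra hi
    exact h1 (homWord_sublist_append hxy.1 (by simp [hi]) hxy.2)
  subst hi
  obtain ⟨u, j, v, huv, hu, hv⟩ := exists_eq_append_replicate_append_of_not_homWord_sublist h1
  rw [huv] at h0 ⊢
  refine isDecomposable_of_count_not_le h0 hu hv ?_
  have hcount := congrArg (count false) huv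
  simp only [replicate_zero, append_nil, count_append, append_assoc] at hcount
  simp only [Bool.not_true]
  omega

end Decomposition

/-- **Lemma 1.** If `L` is a binary subword-closed language such that neither
`0^{m+1} 1 0^{m+1}` nor `1^{m+1} 0 1^{m+1}` belongs to `L` (i.e. `Hom(L) ≤ m`),
then every word of `L` can be written as `w₁ a^i w₂ ā^j w₃` with `a ∈ E`,
`i, j ∈ ω`, and `|w₁|, |w₂|, |w₃| ≤ 2m`. -/
theorem subword_closed_decomposition (L : Set Word) (hL : SubwordClosed L) (m : ℕ)
    (h0 : homWord (m + 1) false ∉ L) (h1 : homWord (m + 1) true ∉ L) :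
    ∀ w ∈ L, ∃ (a : Bool) (i j : ℕ) (w₁ w₂ w₃ : Word),
      w = w₁ ++ List.replicate i a ++ w₂ ++ List.replicate j (!a) ++ w₃ ∧
      w₁.length ≤ 2 * m ∧ w₂.length ≤ 2 * m ∧ w₃.length ≤ 2 * m := fun w hw =>
  isDecomposable_of_not_homWord_sublist (fun hs => h0 (hL w hw _ hs)) (fun hs => h1 (hL w hw _ hs))
end

section
/- Let L be a binary subword-closed language and m a natural number such that none of the words 0^{m+1}·1·0^{m+1}, 1^{m+1}·0·1^{m+1}, 0^{m+1}·1^{m+1}, 1^{m+1}·0^{m+1} belongs to L (i.e., max(Hom(L), Het(L)) ≤ m). Then, with t = 2m and p = 2^{3t+3}·(2t+4), for every natural number n the set L(n) of words of L of length n has at most p elements. -/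
/-! A word of `L` cannot contain both letters more than `2m` times: otherwise some letter `a`
occurs at least `m + 1` times among the first `2m + 1` letters, where `ā` then occurs at most `m`
times, so `ā` occurs at least `m + 1` times afterwards and `a^{m+1} ā^{m+1}` is a subword.
At a position with at least `3m + 1` letters on each side, a letter occurring at most `2m` times
is therefore flanked by `m + 1` copies of the other letter on each side, which gives the subword
`ā^{m+1} a ā^{m+1}`. So all the middle letters of a word of `L` equal its majority letter, and a
word of `L(n)` is determined by its first and last `3m + 1` letters and that letter:
`|L(n)| ≤ 2^{2(3m+1)+1} = 2^{3t+3}`. -/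

open List

lemma List.count_take_add_count_drop {α : Type*} [BEq α] (l : List α) (k : ℕ) (a : α) :
    (l.take k).count a + (l.drop k).count a = l.count a := by
  rw [← count_append, take_append_drop]

theorem exists_hetWord_sublist_of_lt_count {m : ℕ} {w : Word} (hf : 2 * m < w.count false)
    (ht : 2 * m < w.count true) : ∃ a, hetWord (m + 1) a <+ w := by
  have hlen : (w.take (2 * m + 1)).length = 2 * m + 1 := by
    have := w.count_false_add_count_true
    simp only [length_take]
    omega
  obtain ⟨a, hpre, hpre'⟩ : ∃ a, m + 1 ≤ (w.take (2 * m + 1)).count a ∧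
      (w.take (2 * m + 1)).count (!a) ≤ m := by
    have := (w.take (2 * m + 1)).count_false_add_count_true
    by_cases h : m + 1 ≤ (w.take (2 * m + 1)).count false
    · exact ⟨false, h, by simp only [Bool.not_false]; omega⟩
    · exact ⟨true, by omega, by simp only [Bool.not_true]; omega⟩
  have hsuf : m + 1 ≤ (w.drop (2 * m + 1)).count (!a) := by
    have := w.count_take_add_count_drop (2 * m + 1) (!a)
    cases a <;> simp only [Bool.not_false, Bool.not_true] at this hpre' ⊢ <;> omega
  refine ⟨a, ?_⟩
  rw [← take_append_drop (2 * m + 1) w]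
  exact (replicate_sublist_iff.2 hpre).append (replicate_sublist_iff.2 hsuf)

theorem homWord_sublist_of_count_getElem_le {m c i : ℕ} {w : Word} (hi : i < w.length)
    (hc : w.count w[i] ≤ c) (hleft : c + m + 1 ≤ i) (hright : i + c + m + 1 < w.length) :
    homWord (m + 1) (!w[i]) <+ w := by
  have hpre : m + 1 ≤ (w.take i).count (!w[i]) := by
    have := (w.take i).count_add_count_not w[i]
    have := (take_sublist i w).count_le w[i]
    simp only [length_take] at *
    omega
  have hsuf : m + 1 ≤ (w.drop (i + 1)).count (!w[i]) := by
    have := (w.drop (i + 1)).count_add_count_not w[i]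
    have := (drop_sublist (i + 1) w).count_le w[i]
    simp only [length_drop] at *
    omega
  calc homWord (m + 1) (!w[i])
      = replicate (m + 1) (!w[i]) ++ w[i] :: replicate (m + 1) (!w[i]) := by
        simp [homWord]
    _ <+ w.take i ++ w[i] :: w.drop (i + 1) :=
        (replicate_sublist_iff.2 hpre).append ((replicate_sublist_iff.2 hsuf).cons_cons _)
    _ = w := by rw [← drop_eq_getElem_cons, take_append_drop]

theorem List.eq_of_getD_eq_of_getD_reverse_eq {α : Type*} {d : α} {K : ℕ} {u v : List α}
    (hlen : u.length = v.length) (hpre : ∀ i < K, u.getD i d = v.getD i d)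
    (hsuf : ∀ i < K, u.reverse.getD i d = v.reverse.getD i d)
    (hmid : ∀ i (hu : i < u.length) (hv : i < v.length), K ≤ i → i + K < u.length →
      u[i] = v[i]) : u = v := by
  refine ext_getElem hlen fun i hu hv => ?_
  by_cases hleft : i < K
  · simpa [getD_eq_getElem, hu, hv] using hpre i hleft
  by_cases hright : i + K < u.length
  · exact hmid i hu hv (by omega) hright
  have h := hsuf (u.length - 1 - i) (by omega)
  rw [getD_eq_getElem _ _ (by simp; omega), getD_eq_getElem _ _ (by simp; omega),
    getElem_reverse, getElem_reverse] at h
  simpa [← hlen, show u.length - 1 - (u.length - 1 - i) = i by omega] using h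

section

variable {L : Set Word} {m : ℕ}

theorem SubwordClosed.count_false_le_or_count_true_le (hL : SubwordClosed L)
    (hhet : ∀ a : Bool, hetWord (m + 1) a ∉ L) {w : Word} (hw : w ∈ L) :
    w.count false ≤ 2 * m ∨ w.count true ≤ 2 * m := by
  by_contra! h
  obtain ⟨a, ha⟩ := exists_hetWord_sublist_of_lt_count h.1 h.2
  exact hhet a (hL w hw _ ha)

theorem SubwordClosed.getElem_eq_decide (hL : SubwordClosed L)
    (hhom : ∀ a : Bool, homWord (m + 1) a ∉ L) (hhet : ∀ a : Bool, hetWord (m + 1) a ∉ L)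
    {w : Word} (hw : w ∈ L) {i : ℕ} (hi : i < w.length) (hleft : 3 * m + 1 ≤ i)
    (hright : i + (3 * m + 1) < w.length) :
    w[i] = decide (2 * m < w.count true) := by
  have hfreq : 2 * m < w.count w[i] := by
    by_contra! h
    exact hhom _ (hL w hw _ (homWord_sublist_of_count_getElem_le hi h (by omega) (by omega)))
  have htotal := w.count_false_add_count_true
  have hminority := hL.count_false_le_or_count_true_le hhet hw
  cases hwi : w[i] <;> rw [hwi] at hfreq <;>
    simp only [false_eq_decide_iff, true_eq_decide_iff, not_lt] <;> omega

end

/-- **Lemma 2.** If `L` is a binary subword-closed language such that none of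
`0^{m+1} 1 0^{m+1}`, `1^{m+1} 0 1^{m+1}`, `0^{m+1} 1^{m+1}`, `1^{m+1} 0^{m+1}`
belongs to `L` (i.e. `max(Hom(L), Het(L)) ≤ m`), then with `t = 2m` and
`p = 2^{3t+3}(2t+4)` we have `|L(n)| ≤ p` for every `n`. -/
theorem subword_closed_card_bound (L : Set Word) (hL : SubwordClosed L) (m : ℕ)
    (hhom : ∀ a : Bool, homWord (m + 1) a ∉ L)
    (hhet : ∀ a : Bool, hetWord (m + 1) a ∉ L) :
    ∀ n : ℕ, (LangAt L n).ncard ≤ 2 ^ (3 * (2 * m) + 3) * (2 * (2 * m) + 4) := by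
  intro n
  let code (w : Word) : (Fin (3 * m + 1) → Bool) × (Fin (3 * m + 1) → Bool) × Bool :=
    (fun i => w.getD i false, fun i => w.reverse.getD i false, decide (2 * m < w.count true))
  have hinj : Set.InjOn code (LangAt L n) := by
    rintro u ⟨hu, rfl⟩ v ⟨hv, hvn⟩ h
    simp only [code, Prod.mk.injEq, funext_iff, Fin.forall_iff] at h
    obtain ⟨hpre, hsuf, hmaj⟩ := h
    refine eq_of_getD_eq_of_getD_reverse_eq hvn.symm hpre hsuf fun i hui hvi hleft hright => ?_
    rw [hL.getElem_eq_decide hhom hhet hu hui hleft hright,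
      hL.getElem_eq_decide hhom hhet hv hvi hleft (hvn ▸ hright), hmaj]
  calc (LangAt L n).ncard
      ≤ (Set.univ : Set (_ × _ × Bool)).ncard :=
        Set.ncard_le_ncard_of_injOn code (fun _ _ => Set.mem_univ _) hinj
    _ = 2 ^ (3 * (2 * m) + 3) := by
        rw [Set.ncard_univ, Nat.card_eq_fintype_card]
        simp only [Fintype.card_prod, Fintype.card_fun, Fintype.card_bool, Fintype.card_fin]
        ring
    _ ≤ 2 ^ (3 * (2 * m) + 3) * (2 * (2 * m) + 4) := Nat.le_mul_of_pos_right _ (by omega)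
end

section
/- Let L be a binary subword-closed language such that for every natural number m there exists a letter a ∈ E with a^m ā^m ∈ L (i.e., Het(L) = ∞). Then for every natural number n, the set L(n) contains, for some letter a ∈ E, all the words a^i ā^{n−i} for i = 0, 1, …, n; in particular |L(n)| ≥ n + 1. -/
/-- If `L` is a binary subword-closed language with `Het(L) = ∞`, then for every `n`
the set `L(n)` contains, for some letter `a`, all the words `a^i ā^{n-i}` for
`i = 0, …, n`; in particular `|L(n)| ≥ n + 1`. -/
theorem het_infinite_many_words (L : Set Word) (hL : SubwordClosed L)
    (hhet : ∀ m : ℕ, ∃ a : Bool, hetWord m a ∈ L) :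
    ∀ n : ℕ, ∃ a : Bool,
      (∀ i : ℕ, i ≤ n → List.replicate i a ++ List.replicate (n - i) (!a) ∈ L) ∧
      n + 1 ≤ (LangAt L n).ncard := by
  intro n
  obtain ⟨a, ha⟩ := hhet n
  refine ⟨a, ?_, ?_⟩
  · intro i hi
    refine hL _ ha _ ?_
    exact List.Sublist.append ((List.replicate_sublist_replicate a).2 hi)
      ((List.replicate_sublist_replicate (!a)).2 (Nat.sub_le n i))
  · have hmem : ∀ i ≤ n, (List.replicate i a ++ List.replicate (n - i) (!a)) ∈ LangAt L n := by
      intro i hi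
      refine ⟨hL _ ha _ ?_, ?_⟩
      · exact List.Sublist.append ((List.replicate_sublist_replicate a).2 hi)
          ((List.replicate_sublist_replicate (!a)).2 (Nat.sub_le n i))
      · simp [List.length_append, Nat.add_sub_cancel' hi]
    have hfin : (LangAt L n).Finite :=
      (List.finite_length_eq Bool n).subset (fun w hw => hw.2)
    set f : ℕ → Word := fun i => List.replicate i a ++ List.replicate (n - i) (!a) with hf
    have hinj : Set.InjOn f (Finset.range (n+1) : Set ℕ) := by
      intro i hi j hj hij
      have : (f i).count a = (f j).count a := by rw [hij]
      simpa [hf, List.count_append, List.count_replicate, Bool.eq_not_self] using this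
    have hsub : f '' (Finset.range (n+1) : Set ℕ) ⊆ LangAt L n := by
      rintro _ ⟨i, hi, rfl⟩
      simp only [Finset.coe_range, Set.mem_Iio] at hi
      exact hmem i (Nat.lt_succ_iff.1 hi)
    calc n + 1 = (f '' (Finset.range (n+1) : Set ℕ)).ncard := by
          rw [Set.ncard_image_of_injOn hinj]
          rw [Set.ncard_coe_finset, Finset.card_range]
      _ ≤ (LangAt L n).ncard := Set.ncard_le_ncard hsub hfin
end

section
/- Let L be a binary subword-closed language with Hom(L) < ∞. Then there exists a natural number c (depending only on L) such that for every natural number n and every word w ∈ L(n), there exists a set B_w of at most c positions from {1,…,n} such that w is the only word of L(n) agreeing with w at every position of B_w; that is, for every u ∈ L(n) with u ≠ w there is a position in B_w at which u and w differ. -/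
/-!
Choose `m` with `a^m ā a^m ∉ L` for both letters `a`, and certify `w` by the positions of its
first `m` and last `m` occurrences of each letter: at most `4m` positions. Suppose `u ∈ L(n)`
agrees with `w` there but `u_j ≠ w_j = a`. Then `j` is an occurrence of `a` in `w` outside the
certificate, so it has `m` certified occurrences of `a` on each side, where `u` also carries `a`;
with `u_j = ā` this exhibits `a^m ā a^m` as a subword of `u`, and subword-closure puts it in `L`.
-/

namespace List

variable {α : Type*}

theorem take_append_cons_drop_sublist {l : List α} {m : ℕ} {x : α} (hx : x ∈ l)
    (hxt : x ∉ l.take m) (hxd : x ∉ l.drop (l.length - m)) :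
    l.take m ++ x :: l.drop (l.length - m) <+ l := by
  have hm : m ≤ l.length - m := by
    by_contra! h
    rw [← take_append_drop (l.length - m) l, mem_append] at hx
    exact hx.elim (fun h' => hxt ((take_prefix_take_left h.le).subset h')) hxd
  have hsplit : l.take m ++ (l.take (l.length - m)).drop m = l.take (l.length - m) := by
    simpa [take_take, min_eq_left hm] using take_append_drop m (l.take (l.length - m))
  have hmid : x ∈ (l.take (l.length - m)).drop m := by
    have hx' : x ∈ l.take (l.length - m) := by
      rw [← take_append_drop (l.length - m) l, mem_append] at hx
      exact hx.resolve_right hxd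
    rw [← hsplit, mem_append] at hx'
    exact hx'.resolve_left hxt
  calc l.take m ++ x :: l.drop (l.length - m)
      <+ l.take m ++ ((l.take (l.length - m)).drop m ++ l.drop (l.length - m)) :=
        ((singleton_sublist.2 hmid).append (Sublist.refl _)).append_left _
    _ = l := by rw [← append_assoc, hsplit, take_append_drop]

theorem map_getD_sublist {l : List α} {d : α} {is : List ℕ} (hlt : ∀ i ∈ is, i < l.length)
    (his : is.Pairwise (· < ·)) : is.map (l.getD · d) <+ l := by
  have hfin : is.map (l.getD · d) =
      (is.pmap (fun i h => (⟨i, h⟩ : Fin l.length)) hlt).map (l[·]) := by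
    rw [map_pmap, ← pmap_eq_map hlt]
    exact pmap_congr_left _ fun i _ h _ => getD_eq_getElem l d h
  rw [hfin]
  exact map_getElem_sublist (his.pmap _ fun _ _ _ _ h => h)

theorem exists_getD_ne_of_ne {l l' : List α} (d : α) (hlen : l.length = l'.length)
    (hne : l ≠ l') : ∃ j < l'.length, l.getD j d ≠ l'.getD j d := by
  by_contra! hsame
  exact hne (ext_getElem hlen fun j hj hj' => by simpa [hj, hj'] using hsame j hj')

theorem mem_idxsOf_iff_getD [BEq α] [LawfulBEq α] {l : List α} {a d : α} {i : ℕ} :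
    i ∈ l.idxsOf a ↔ i < l.length ∧ l.getD i d = a := by
  rw [mem_idxsOf_iff_exists_getElem_pos]
  exact ⟨fun ⟨h, h'⟩ => ⟨h, by simpa [h] using h'⟩, fun ⟨h, h'⟩ => ⟨h, by simpa [h] using h'⟩⟩

end List

def outerPositions (m : ℕ) (w : Word) (a : Bool) : List ℕ :=
  (w.idxsOf a).take m ++ (w.idxsOf a).drop ((w.idxsOf a).length - m)

def certificate (m : ℕ) (w : Word) : Finset ℕ :=
  Finset.univ.biUnion fun a => (outerPositions m w a).toFinset

section Certificate

variable (m : ℕ) (w : Word)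

theorem mem_idxsOf_of_mem_outerPositions {a : Bool} {i : ℕ} (hi : i ∈ outerPositions m w a) :
    i ∈ w.idxsOf a :=
  (List.mem_append.1 hi).elim (List.take_subset _ _ ·) (List.drop_subset _ _ ·)

theorem mem_certificate_of_mem_outerPositions {a : Bool} {i : ℕ}
    (hi : i ∈ outerPositions m w a) : i ∈ certificate m w :=
  Finset.mem_biUnion.2 ⟨a, Finset.mem_univ a, List.mem_toFinset.2 hi⟩

theorem certificate_subset_range : certificate m w ⊆ Finset.range w.length := by
  intro i hi
  obtain ⟨a, -, hia⟩ := Finset.mem_biUnion.1 hi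
  have hiw := mem_idxsOf_of_mem_outerPositions m w (List.mem_toFinset.1 hia)
  exact Finset.mem_range.2 (List.mem_idxsOf_iff_getD (d := false) |>.1 hiw).1

theorem card_certificate_le : (certificate m w).card ≤ 4 * m := by
  have hpiece : ∀ a, (outerPositions m w a).toFinset.card ≤ 2 * m := fun a =>
    calc (outerPositions m w a).toFinset.card ≤ (outerPositions m w a).length :=
          List.toFinset_card_le _
      _ ≤ 2 * m := by
          simp only [outerPositions, List.length_append, List.length_take, List.length_drop]
          omega
  calc (certificate m w).card ≤ ∑ a : Bool, (outerPositions m w a).toFinset.card :=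
        Finset.card_biUnion_le
    _ ≤ ∑ _a : Bool, 2 * m := Finset.sum_le_sum fun a _ => hpiece a
    _ = 4 * m := by rw [Finset.sum_const, Finset.card_univ, Fintype.card_bool, smul_eq_mul]; ring

end Certificate

theorem homWord_sublist_of_agreeOn_certificate {m : ℕ} {u w : Word}
    (hlen : u.length = w.length)
    (hagree : ∀ i ∈ certificate m w, u.getD i false = w.getD i false) {j : ℕ}
    (hj : j < w.length) (hne : u.getD j false ≠ w.getD j false) :
    (homWord m (w.getD j false)).Sublist u := by
  set a := w.getD j false
  set P := w.idxsOf a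
  have hjP : j ∈ P := List.mem_idxsOf_iff_getD.2 ⟨hj, rfl⟩
  have hjout : j ∉ outerPositions m w a := fun h =>
    hne (hagree j (mem_certificate_of_mem_outerPositions m w h))
  have hjt : j ∉ P.take m := fun h => hjout (List.mem_append_left _ h)
  have hjd : j ∉ P.drop (P.length - m) := fun h => hjout (List.mem_append_right _ h)
  have hmP : m ≤ P.length := by
    by_contra! h
    exact hjt (by rwa [List.take_of_length_le h.le])
  have hJ := List.take_append_cons_drop_sublist hjP hjt hjd
  have hua : ∀ i ∈ outerPositions m w a, u.getD i false = a := fun i hi =>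
    (hagree i (mem_certificate_of_mem_outerPositions m w hi)).trans
      (List.mem_idxsOf_iff_getD.1 (mem_idxsOf_of_mem_outerPositions m w hi)).2
  have hF : (P.take m).map (u.getD · false) = List.replicate m a :=
    List.eq_replicate_iff.2 ⟨by simp [hmP], fun b hb => by
      obtain ⟨i, hi, rfl⟩ := List.mem_map.1 hb
      exact hua i (List.mem_append_left _ hi)⟩
  have hD : (P.drop (P.length - m)).map (u.getD · false) = List.replicate m a :=
    List.eq_replicate_iff.2 ⟨by simp only [List.length_map, List.length_drop]; omega,
      fun b hb => by
        obtain ⟨i, hi, rfl⟩ := List.mem_map.1 hb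
        exact hua i (List.mem_append_right _ hi)⟩
  have hword : (P.take m ++ j :: P.drop (P.length - m)).map (u.getD · false) = homWord m a := by
    rw [List.map_append, List.map_cons, hF, hD, Bool.eq_not_iff.2 hne, homWord]
    simp
  rw [← hword]
  refine List.map_getD_sublist (fun i hi => ?_) (List.pairwise_idxsOf.sublist hJ)
  exact hlen ▸ (List.mem_idxsOf_iff_getD (d := false) |>.1 (hJ.subset hi)).1

/-- If `L` is a binary subword-closed language with `Hom(L) < ∞`, then there is a
constant `c` (depending only on `L`) such that every word `w ∈ L(n)` is distinguished
from every other word of `L(n)` by a set `B_w` of at most `c` positions. -/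
theorem bounded_certificates (L : Set Word) (hL : SubwordClosed L)
    (hhom : ¬ ∀ m : ℕ, ∃ a : Bool, homWord m a ∈ L) :
    ∃ c : ℕ, ∀ n : ℕ, ∀ w ∈ L, w.length = n →
      ∃ B : Finset ℕ, B ⊆ Finset.range n ∧ B.card ≤ c ∧
        ∀ u ∈ L, u.length = n → u ≠ w →
          ∃ j ∈ B, u.getD j false ≠ w.getD j false := by
  obtain ⟨m, hm⟩ := not_forall.1 hhom
  refine ⟨4 * m, fun n w _ hn => ⟨certificate m w, hn ▸ certificate_subset_range m w,
    card_certificate_le m w, fun u hu hun hne => ?_⟩⟩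
  by_contra! hagree
  have hlen : u.length = w.length := hun.trans hn.symm
  obtain ⟨j, hj, hdiff⟩ := List.exists_getD_ne_of_ne false hlen hne
  exact hm ⟨_, hL u hu _ (homWord_sublist_of_agreeOn_certificate hlen hagree hj hdiff)⟩
end

section
/- Let L be a binary subword-closed language, let w₀ be a binary word not belonging to L, and let n be a natural number with n > |w₀|. Then for every word w ∈ L(n) and every set S of positions from {1,…,n} with |S| ≤ n − |w₀|, there exists a binary word w' of length n that agrees with w at every position of S and does not belong to L (w' is obtained from w by changing at most |w₀| letters outside S so that w₀ becomes a subsequence of w'). -/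
lemma embed_aux : ∀ (w u : Word) (S : Finset ℕ), S ⊆ Finset.range w.length →
    S.card + u.length ≤ w.length →
    ∃ w' : Word, w'.length = w.length ∧
      (∀ j ∈ S, w'.getD j false = w.getD j false) ∧ u.Sublist w' := by
  intro w
  induction w with
  | nil =>
    intro u S hS hcard
    simp at hcard
    obtain ⟨hS0, hu⟩ := hcard
    exact ⟨[], rfl, by simp [hS0], by simp [hu]⟩
  | cons b t ih =>
    intro u S hS hcard
    set S' : Finset ℕ := (S.erase 0).image (· - 1) with hS'def
    have hmem : ∀ k, k ∈ S' ↔ k + 1 ∈ S := by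
      intro k
      constructor
      · intro hk
        obtain ⟨m, hm, hmk⟩ := Finset.mem_image.mp hk
        have hm0 : m ≠ 0 := (Finset.mem_erase.mp hm).1
        have : m = k + 1 := by omega
        exact this ▸ (Finset.mem_erase.mp hm).2
      · intro hk
        exact Finset.mem_image.mpr ⟨k + 1, Finset.mem_erase.mpr ⟨by omega, hk⟩, rfl⟩
    have hS'sub : S' ⊆ Finset.range t.length := by
      intro k hk
      have := hS ((hmem k).mp hk)
      simp only [Finset.mem_range, List.length_cons] at this ⊢
      omega
    have hcard' : S'.card = (S.erase 0).card := by
      apply Finset.card_image_of_injOn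
      intro a ha b hb hab
      have ha0 : a ≠ 0 := (Finset.mem_erase.mp ha).1
      have hb0 : b ≠ 0 := (Finset.mem_erase.mp hb).1
      simp only at hab
      omega
    by_cases h0 : 0 ∈ S
    · have hc : S'.card + u.length ≤ t.length := by
        have := Finset.card_erase_of_mem h0
        simp only [List.length_cons] at hcard
        have hpos : 1 ≤ S.card := Finset.card_pos.mpr ⟨0, h0⟩
        omega
      obtain ⟨w'', hlen, hagree, hsub⟩ := ih u S' hS'sub hc
      refine ⟨b :: w'', by simp [hlen], ?_, hsub.cons b⟩
      intro j hj
      cases j with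
      | zero => simp
      | succ k =>
        simp only [List.getD_cons_succ]
        exact hagree k ((hmem k).mpr hj)
    · cases u with
      | nil =>
        exact ⟨b :: t, rfl, fun j _ => rfl, List.nil_sublist _⟩
      | cons a u' =>
        have hc : S'.card + u'.length ≤ t.length := by
          have : S.erase 0 = S := Finset.erase_eq_of_notMem h0
          simp only [List.length_cons] at hcard
          rw [hcard', this]
          omega
        obtain ⟨w'', hlen, hagree, hsub⟩ := ih u' S' hS'sub hc
        refine ⟨a :: w'', by simp [hlen], ?_, hsub.cons₂ a⟩
        intro j hj
        cases j with
        | zero => exact absurd hj h0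
        | succ k =>
          simp only [List.getD_cons_succ]
          exact hagree k ((hmem k).mpr hj)

/-- If `w₀ ∉ L` and `n > |w₀|`, then for every `w ∈ L(n)` and every set `S` of at most
`n - |w₀|` positions there is a word `w'` of length `n` agreeing with `w` on `S` that
does not belong to `L`. -/
theorem escape_word_exists (L : Set Word) (hL : SubwordClosed L) (w₀ : Word)
    (hw₀ : w₀ ∉ L) (n : ℕ) (hn : w₀.length < n) :
    ∀ w ∈ L, w.length = n →
      ∀ S : Finset ℕ, S ⊆ Finset.range n → S.card ≤ n - w₀.length →
        ∃ w' : Word, w'.length = n ∧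
          (∀ j ∈ S, w'.getD j false = w.getD j false) ∧ w' ∉ L := by
  intro w hw hwlen S hSsub hScard
  obtain ⟨w', hlen, hagree, hsub⟩ := embed_aux w w₀ S (hwlen ▸ hSsub)
    (by rw [hwlen]; omega)
  exact ⟨w', hwlen ▸ hlen, hagree, fun h => hw₀ (hL w' h w₀ hsub)⟩
end
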